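/- Let L : Y → ℝ and L̂ : ℝᵏ → ℝ satisfy L = L̂ ∘ ξ for a lifting map ξ : Y → ℝᵏ, and suppose ξ intertwines each flow Φ_{uʲ} with a matrix U_{uʲ}ᵀ. Then for any two switching sequences τ, τ' ∈ {u⁰,…,u^{n_c−1}}ᵖ and any initial condition y⁰, the full cost of τ is less than or equal to the full cost of τ' if and only if the surrogate (lifted) cost of τ is less than or equal to the surrogate cost of τ'. Hence the argmin sets of the full and surrogate switched MPC problems coincide. -/
import Mathlib


/-- Full state trajectory of the switched system. -/
def fullTraj {Y : Type*} {nc p : ℕ} (Φ : Fin nc → Y → Y)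
    (τ : Fin p → Fin nc) (y0 : Y) : ℕ → Y
  | 0 => y0
  | i + 1 => if h : i < p then Φ (τ ⟨i, h⟩) (fullTraj Φ τ y0 i)
             else fullTraj Φ τ y0 i

/-- Surrogate (lifted) trajectory. -/
def surrTraj {k nc p : ℕ} (U : Fin nc → Matrix (Fin k) (Fin k) ℝ)
    (τ : Fin p → Fin nc) (v0 : Fin k → ℝ) : ℕ → Fin k → ℝ
  | 0 => v0
  | i + 1 => if h : i < p then (U (τ ⟨i, h⟩)).transpose.mulVec (surrTraj U τ v0 i)
             else surrTraj U τ v0 i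


theorem xi_traj {Y : Type*} {k nc p : ℕ}
    (Φ : Fin nc → Y → Y) (ξ : Y → Fin k → ℝ)
    (U : Fin nc → Matrix (Fin k) (Fin k) ℝ)
    (hlift : ∀ (j : Fin nc) (y : Y), ξ (Φ j y) = (U j).transpose.mulVec (ξ y))
    (τ : Fin p → Fin nc) (y0 : Y) (i : ℕ) :
    ξ (fullTraj Φ τ y0 i) = surrTraj U τ (ξ y0) i := by
  induction i with
  | zero => rfl
  | succ n ih =>
    simp only [fullTraj, surrTraj]
    split
    · rw [hlift, ih]
    · exact ih

/-- If `L = L̂ ∘ ξ` and `ξ` intertwines each flow `Φ_{uʲ}` with `U_{uʲ}ᵀ`, then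
for any two switching sequences the full costs compare exactly as the surrogate
costs do; hence the argmin sets of the full and surrogate switched MPC problems
coincide. -/
theorem switched_costs_order_equiv {Y : Type*} {k nc p : ℕ}
    (Φ : Fin nc → Y → Y) (ξ : Y → Fin k → ℝ)
    (U : Fin nc → Matrix (Fin k) (Fin k) ℝ)
    (hlift : ∀ (j : Fin nc) (y : Y), ξ (Φ j y) = (U j).transpose.mulVec (ξ y))
    (L : Y → ℝ) (Lhat : (Fin k → ℝ) → ℝ)
    (hL : ∀ y : Y, L y = Lhat (ξ y))
    (y0 : Y) :
    (∀ τ τ' : Fin p → Fin nc,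
      ((∑ i ∈ Finset.range p, L (fullTraj Φ τ y0 i)) ≤
       (∑ i ∈ Finset.range p, L (fullTraj Φ τ' y0 i)) ↔
       (∑ i ∈ Finset.range p, Lhat (surrTraj U τ (ξ y0) i)) ≤
       (∑ i ∈ Finset.range p, Lhat (surrTraj U τ' (ξ y0) i)))) ∧
    ({τ : Fin p → Fin nc | ∀ τ' : Fin p → Fin nc,
        (∑ i ∈ Finset.range p, L (fullTraj Φ τ y0 i)) ≤
        (∑ i ∈ Finset.range p, L (fullTraj Φ τ' y0 i))} =
     {τ : Fin p → Fin nc | ∀ τ' : Fin p → Fin nc,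
        (∑ i ∈ Finset.range p, Lhat (surrTraj U τ (ξ y0) i)) ≤
        (∑ i ∈ Finset.range p, Lhat (surrTraj U τ' (ξ y0) i))}) := by

  have key : ∀ τ : Fin p → Fin nc,
      (∑ i ∈ Finset.range p, L (fullTraj Φ τ y0 i)) =
      (∑ i ∈ Finset.range p, Lhat (surrTraj U τ (ξ y0) i)) := by
    intro τ
    refine Finset.sum_congr rfl fun i _ => ?_
    rw [hL, xi_traj Φ ξ U hlift]
  constructor
  · intro τ τ'
    rw [key, key]
  · ext τ
    simp only [Set.mem_setOf_eq]
    constructor <;> intro h τ' <;> have := h τ' <;> rw [key, key] at * <;> linarith
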